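/- arXiv:2411.04315 — 5 statements merged into one kernel-verified Lean document; each statement's English description precedes it below -/
import Mathlib

section
/- Let f : ℝⁿ → ℝᵐ satisfy the dot-product order preservation property (⟨x, u⟩ ≤ ⟨x, v⟩ implies ⟨f(x), f(u)⟩ ≤ ⟨f(x), f(v)⟩ for all x, u, v ∈ ℝⁿ). If u, v ∈ ℝⁿ are orthogonal, then ⟨f(u), f(v)⟩ = ‖f(0)‖². -/
open RealInnerProductSpace

theorem inner_map_eq_of_inner_eq {E F : Type*} [NormedAddCommGroup E] [InnerProductSpace ℝ E]
    [NormedAddCommGroup F] [InnerProductSpace ℝ F] {f : E → F}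
    (hord : ∀ x u v, ⟪x, u⟫ ≤ ⟪x, v⟫ → ⟪f x, f u⟫ ≤ ⟪f x, f v⟫) {x u v : E}
    (h : ⟪x, u⟫ = ⟪x, v⟫) : ⟪f x, f u⟫ = ⟪f x, f v⟫ :=
  (hord x u v h.le).antisymm (hord x v u h.ge)

theorem stmt_4 {n m : ℕ} (f : EuclideanSpace ℝ (Fin n) → EuclideanSpace ℝ (Fin m))
    (hord : ∀ x u v, ⟪x, u⟫ ≤ ⟪x, v⟫ → ⟪f x, f u⟫ ≤ ⟪f x, f v⟫)
    (u v : EuclideanSpace ℝ (Fin n)) (huv : ⟪u, v⟫ = 0) :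
    ⟪f u, f v⟫ = ‖f 0‖ ^ 2 :=
  calc ⟪f u, f v⟫ = ⟪f u, f 0⟫ := inner_map_eq_of_inner_eq hord (by simp [huv])
    _ = ⟪f 0, f u⟫ := real_inner_comm _ _
    _ = ⟪f 0, f 0⟫ := inner_map_eq_of_inner_eq hord (by simp)
    _ = ‖f 0‖ ^ 2 := real_inner_self_eq_norm_sq _
end

section
/- Let f : ℝⁿ → ℝᵐ satisfy the dot-product order preservation property and f(0) = 0. Then f preserves orthogonality: for all u, v ∈ ℝⁿ, ⟨u, v⟩ = 0 implies ⟨f(u), f(v)⟩ = 0. -/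
open RealInnerProductSpace

theorem stmt_5 {n m : ℕ} (f : EuclideanSpace ℝ (Fin n) → EuclideanSpace ℝ (Fin m))
    (hord : ∀ x u v, ⟪x, u⟫ ≤ ⟪x, v⟫ → ⟪f x, f u⟫ ≤ ⟪f x, f v⟫)
    (h0 : f 0 = 0) :
    ∀ u v, ⟪u, v⟫ = 0 → ⟪f u, f v⟫ = 0 := by
  intro u v huv
  have := inner_map_eq_of_inner_eq hord (huv.trans (inner_zero_right u).symm)
  rwa [h0, inner_zero_right] at this
end

section
/- Let f : ℝⁿ → ℝᵐ with m < n satisfy: (i) for all x, u, v ∈ ℝⁿ, ⟨x, u⟩ ≤ ⟨x, v⟩ implies ⟨f(x), f(u)⟩ ≤ ⟨f(x), f(v)⟩, and (ii) x ≠ 0 implies f(x) ≠ 0. Then f(0) ≠ 0. -/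
open RealInnerProductSpace

theorem stmt_6 {n m : ℕ} (hmn : m < n)
    (f : EuclideanSpace ℝ (Fin n) → EuclideanSpace ℝ (Fin m))
    (hord : ∀ x u v, ⟪x, u⟫ ≤ ⟪x, v⟫ → ⟪f x, f u⟫ ≤ ⟪f x, f v⟫)
    (hnz : ∀ x, x ≠ 0 → f x ≠ 0) : f 0 ≠ 0 := by
  intro h0
  -- orthogonality is preserved
  have horth : ∀ x u : EuclideanSpace ℝ (Fin n), ⟪x, u⟫ = 0 → ⟪f x, f u⟫ = 0 := by
    intro x u hxu
    have h1 := hord x u 0 (by simp [hxu])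
    have h2 := hord x 0 u (by simp [hxu])
    simp only [h0, inner_zero_right] at h1 h2
    linarith
  set E := EuclideanSpace.basisFun (Fin n) ℝ with hE
  set g : Fin n → EuclideanSpace ℝ (Fin m) := fun i => ‖f (E i)‖⁻¹ • f (E i) with hg
  have hne : ∀ i, f (E i) ≠ 0 := fun i => hnz _ (by
    rw [hE]
    simp only [EuclideanSpace.basisFun_apply]
    intro h
    have := congrArg (fun v => v i) h
    simp [EuclideanSpace.single_apply] at this)
  have hon : Orthonormal ℝ g := by
    constructor
    · intro i
      exact norm_smul_inv_norm (hne i)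
    · intro i j hij
      have : ⟪(E i : EuclideanSpace ℝ (Fin n)), E j⟫ = 0 := by
        simp [hE, EuclideanSpace.basisFun_apply, EuclideanSpace.inner_single_left,
          EuclideanSpace.single_apply, hij.symm]
      have h := horth _ _ this
      simp only [hg, real_inner_smul_left, real_inner_smul_right, h, mul_zero]
  have hli := hon.linearIndependent
  have hcard := hli.fintype_card_le_finrank
  simp [finrank_euclideanSpace_fin] at hcard
  omega
end

section
/- Let f : ℝⁿ → ℝᵐ satisfy the dot-product order preservation property with f(0) = 0 and f nonzero on nonzero vectors. Then m ≥ n. -/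
open RealInnerProductSpace

theorem stmt_7 {n m : ℕ} (f : EuclideanSpace ℝ (Fin n) → EuclideanSpace ℝ (Fin m))
    (hord : ∀ x u v, ⟪x, u⟫ ≤ ⟪x, v⟫ → ⟪f x, f u⟫ ≤ ⟪f x, f v⟫)
    (h0 : f 0 = 0)
    (hnz : ∀ x, x ≠ 0 → f x ≠ 0) : m ≥ n := by
  have key : ∀ x u : EuclideanSpace ℝ (Fin n), ⟪x, u⟫ = 0 → ⟪f x, f u⟫ = 0 := by
    intro x u h
    have h1 := hord x u 0 (by simp [h])
    have h2 := hord x 0 u (by simp [h])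
    rw [h0] at h1 h2
    simp only [inner_zero_right] at h1 h2
    linarith
  set v : Fin n → EuclideanSpace ℝ (Fin m) := fun i => f (EuclideanSpace.single i 1) with hv
  have hli : LinearIndependent ℝ v := by
    apply linearIndependent_of_ne_zero_of_inner_eq_zero
    · intro i
      refine hnz _ fun h => ?_
      have := congrArg (fun x => x i) h
      simp [EuclideanSpace.single_apply] at this
    · intro i j hij
      apply key
      simp [EuclideanSpace.inner_single_left, EuclideanSpace.single_apply, hij.symm]
  simpa using hli.fintype_card_le_finrank
end

section
/- If f : ℝⁿ → ℝᵐ satisfies the dot-product order preservation property, then the image of f is contained in the affine hyperplane {y ∈ ℝᵐ : ⟨f(0), y⟩ = ‖f(0)‖²}. -/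
open RealInnerProductSpace

theorem stmt_8 {n m : ℕ} (f : EuclideanSpace ℝ (Fin n) → EuclideanSpace ℝ (Fin m))
    (hord : ∀ x u v, ⟪x, u⟫ ≤ ⟪x, v⟫ → ⟪f x, f u⟫ ≤ ⟪f x, f v⟫) :
    Set.range f ⊆ {y | ⟪f 0, y⟫ = ‖f 0‖ ^ 2} := by
  rintro _ ⟨x, rfl⟩
  have hx : ⟪f 0, f x⟫ = ⟪f 0, f 0⟫ :=
    inner_map_eq_of_inner_eq hord (by simp only [inner_zero_left])
  rw [Set.mem_ofPred_eq, hx, real_inner_self_eq_norm_sq]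
end
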